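/- arXiv:1805.03811 — 2 statements merged into one kernel-verified Lean document; each statement's English description precedes it below -/
import Mathlib

section
/- Let λ, μ be real numbers with μ > 0 and λ + μ > 0. Let ξ¹, ξ² ∈ ℝ³ be unit vectors with −λ/(λ + 2μ) < ξ¹·ξ² < 1, and let τ¹, τ² ∈ ℝ satisfy (τ¹)² = (τ²)² = μ and τ¹τ² = μ. Then there is no b ∈ ℝ with (τ¹ + bτ²)² = (λ + 2μ)·|ξ¹ + bξ²|². (When the interaction condition fails, the S–S interaction produces no P-characteristic combination; this is the algebraic reason why the nonlinear response u^{SSP} is smooth unless the interaction condition holds.) -/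
/-!
Both frequencies are S-characteristic with τ¹τ² = μ, which forces τ¹ = τ² = τ with τ² = μ.
Writing κ = ξ¹·ξ², the P-characteristic equation for ζ¹ + bζ² then reads
μ(1 + b)² = (λ + 2μ)(1 + 2bκ + b²), i.e. (λ + μ)b² + 2cb + (λ + μ) = 0 with c = (λ + 2μ)κ − μ.
The two bounds on κ say exactly |c| < λ + μ, so this quadratic has negative discriminant.
-/

def dot (x y : Fin 3 → ℝ) : ℝ := ∑ i, x i * y i

lemma dot_add_smul_self (x y : Fin 3 → ℝ) (b : ℝ) :
    dot (x + b • y) (x + b • y) = dot x x + 2 * b * dot x y + b ^ 2 * dot y y := by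
  simp only [dot, Fin.sum_univ_three, Pi.add_apply, Pi.smul_apply, smul_eq_mul]
  ring

lemma eq_of_sq_eq_of_mul_eq {R : Type*} [CommRing R] [NoZeroDivisors R] {a b m : R}
    (ha : a ^ 2 = m) (hb : b ^ 2 = m) (hab : a * b = m) : a = b := by
  have hsq : (a - b) ^ 2 = 0 := by linear_combination ha + hb - 2 * hab
  exact sub_eq_zero.mp (pow_eq_zero_iff two_ne_zero |>.mp hsq)

lemma quadratic_ne_zero_of_abs_lt {K : Type*} [Field K] [LinearOrder K] [IsStrictOrderedRing K]
    {a c : K} (hc : |c| < a) (x : K) : a * (x * x) + 2 * c * x + a ≠ 0 := by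
  intro hx
  have hdiscrim := discrim_eq_sq_of_quadratic_eq_zero hx
  have hca : c ^ 2 < a ^ 2 := sq_lt_sq.mpr (hc.trans_le (le_abs_self a))
  rw [discrim] at hdiscrim
  nlinarith [sq_nonneg (2 * a * x + 2 * c)]

theorem ss_interaction_no_P_when_condition_fails_general (lam mu : ℝ)
    (hlm : 0 < lam + mu)
    (ξ1 ξ2 : Fin 3 → ℝ) (hξ1 : dot ξ1 ξ1 = 1) (hξ2 : dot ξ2 ξ2 = 1)
    (hlow : -lam / (lam + 2 * mu) < dot ξ1 ξ2) (hhigh : dot ξ1 ξ2 < 1)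
    (τ1 τ2 : ℝ) (hτ1 : τ1 ^ 2 = mu) (hτ2 : τ2 ^ 2 = mu)
    (hτ12 : τ1 * τ2 = mu) :
    ¬ ∃ b : ℝ,
      (τ1 + b * τ2) ^ 2 = (lam + 2 * mu) * dot (ξ1 + b • ξ2) (ξ1 + b • ξ2) := by
  rintro ⟨b, hb⟩
  obtain rfl : τ1 = τ2 := eq_of_sq_eq_of_mul_eq hτ1 hτ2 hτ12
  have hl2m : 0 < lam + 2 * mu := by nlinarith [sq_nonneg τ1]
  have hc : |(lam + 2 * mu) * dot ξ1 ξ2 - mu| < lam + mu := by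
    have hlow' := (div_lt_iff₀ hl2m).mp hlow
    exact abs_lt.mpr ⟨by linarith, by nlinarith⟩
  apply quadratic_ne_zero_of_abs_lt hc b
  rw [dot_add_smul_self, hξ1, hξ2] at hb
  linear_combination -hb + (1 + b) ^ 2 * hτ1

/-- When the interaction condition fails, the S–S interaction produces no
P-characteristic combination. -/
theorem ss_interaction_no_P_when_condition_fails (lam mu : ℝ)
    (hmu : 0 < mu) (hlm : 0 < lam + mu)
    (ξ1 ξ2 : Fin 3 → ℝ) (hξ1 : dot ξ1 ξ1 = 1) (hξ2 : dot ξ2 ξ2 = 1)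
    (hlow : -lam / (lam + 2 * mu) < dot ξ1 ξ2) (hhigh : dot ξ1 ξ2 < 1)
    (τ1 τ2 : ℝ) (hτ1 : τ1 ^ 2 = mu) (hτ2 : τ2 ^ 2 = mu)
    (hτ12 : τ1 * τ2 = mu) :
    ¬ ∃ b : ℝ,
      (τ1 + b * τ2) ^ 2 = (lam + 2 * mu) * dot (ξ1 + b • ξ2) (ξ1 + b • ξ2) :=
  ss_interaction_no_P_when_condition_fails_general lam mu hlm ξ1 ξ2 hξ1 hξ2 hlow hhigh τ1 τ2 hτ1 hτ2
    hτ12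
end

section
/- Let λ, μ, A, B be real numbers, let ξ¹, ξ² ∈ ℝ³ be linearly independent unit vectors, set ξ^P = ξ¹ + ξ², and let H(p¹, p²) be the S–S interaction symbol scalar. Let p¹, p² ∈ ℝ³ be unit vectors in the plane spanned by ξ¹ and ξ² with p¹·ξ¹ = 0, p²·ξ² = 0, p¹·ξ² ≥ 0, and p²·ξ¹ ≤ 0, and define α = arccos(ξ¹·ξ²). Then H(p¹, p²) = |ξ^P|²·[(λ + 2μ + B + A/2)·cos²α − (μ + B + A/2)·sin²α]. (The P-wave output of the interaction of two in-plane polarized S waves; it is generically nonvanishing exactly when λ + 2μ + B + A/2 ≠ 0 or μ + B + A/2 ≠ 0.) -/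
open Real

/-- The S–S interaction symbol scalar H(p¹, p²) for two S waves with covectors
ξ¹, ξ² and polarizations p¹, p². -/
noncomputable def HSS (lam mu A B : ℝ) (ξ1 ξ2 p1 p2 : Fin 3 → ℝ) : ℝ :=
  lam * dot p1 p2 * dot ξ1 ξ2 * dot (ξ1 + ξ2) (ξ1 + ξ2)
    + mu * (dot p1 (ξ1 + ξ2) * dot ξ1 ξ2 + dot ξ1 (ξ1 + ξ2) * dot p1 ξ2)
        * dot p2 (ξ1 + ξ2)
    + mu * dot p1 p2 * dot ξ1 (ξ1 + ξ2) * dot ξ2 (ξ1 + ξ2)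
    + mu * (dot p2 (ξ1 + ξ2) * dot ξ2 ξ1 + dot ξ2 (ξ1 + ξ2) * dot p2 ξ1)
        * dot p1 (ξ1 + ξ2)
    + mu * dot p1 p2 * dot ξ2 (ξ1 + ξ2) * dot ξ1 (ξ1 + ξ2)
    + (A / 2) * (dot p1 (ξ1 + ξ2) * dot p2 (ξ1 + ξ2) * dot ξ1 ξ2
      + dot p1 (ξ1 + ξ2) * dot ξ2 (ξ1 + ξ2) * dot ξ1 p2
      + dot ξ1 (ξ1 + ξ2) * dot p2 (ξ1 + ξ2) * dot p1 ξ2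
      + dot ξ1 (ξ1 + ξ2) * dot ξ2 (ξ1 + ξ2) * dot p1 p2)
    + B * (dot p1 p2 * dot ξ1 ξ2 + dot p1 ξ2 * dot ξ1 p2)
        * dot (ξ1 + ξ2) (ξ1 + ξ2)

/- In the plane spanned by the unit vectors ξ¹, ξ² with c = ξ¹·ξ², the polarizations are
forced: p¹ ⊥ ξ¹ and p² ⊥ ξ² give (p¹·ξ²)² = (p²·ξ¹)² = 1 - c², the sign conditions give
p²·ξ¹ = -(p¹·ξ²), and then p¹·p² = c (after dividing by p¹·ξ², which is nonzero because
the unit vector p¹ of the plane cannot be orthogonal to both ξ¹ and ξ²). Substituting these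
values turns H into a polynomial in c and s = p¹·ξ², which reduces to the claim using
s² = 1 - c² = sin²(arccos c). -/

section DotProduct

variable {n R : Type*} [Fintype n] [CommRing R] {u v p q : n → R}

theorem dotProduct_self_mul_sq_of_mem_span_pair (hp : p ∈ Submodule.span R {u, v})
    (hpu : p ⬝ᵥ u = 0) :
    (u ⬝ᵥ u) * (p ⬝ᵥ v) ^ 2 = (p ⬝ᵥ p) * ((u ⬝ᵥ u) * (v ⬝ᵥ v) - (u ⬝ᵥ v) ^ 2) := by
  obtain ⟨a, b, rfl⟩ := Submodule.mem_span_pair.mp hp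
  simp only [add_dotProduct, dotProduct_add, smul_dotProduct, dotProduct_smul, smul_eq_mul,
    dotProduct_comm v u] at hpu ⊢
  linear_combination ((a * (u ⬝ᵥ v) + b * (v ⬝ᵥ v)) * (u ⬝ᵥ v)
    - a * ((u ⬝ᵥ u) * (v ⬝ᵥ v) - (u ⬝ᵥ v) ^ 2)) * hpu

theorem dotProduct_mul_dotProduct_of_mem_span_pair (hp : p ∈ Submodule.span R {u, v})
    (hpu : p ⬝ᵥ u = 0) (hqv : q ⬝ᵥ v = 0) :
    (u ⬝ᵥ u) * (q ⬝ᵥ p) * (p ⬝ᵥ v) = -(u ⬝ᵥ v) * (p ⬝ᵥ p) * (q ⬝ᵥ u) := by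
  obtain ⟨a, b, rfl⟩ := Submodule.mem_span_pair.mp hp
  simp only [add_dotProduct, dotProduct_add, smul_dotProduct, dotProduct_smul, smul_eq_mul,
    dotProduct_comm v u] at hpu ⊢
  linear_combination ((q ⬝ᵥ u) * (a * (u ⬝ᵥ v) + b * (v ⬝ᵥ v)) + (u ⬝ᵥ v) * a * (q ⬝ᵥ u)) * hpu
    + (u ⬝ᵥ u) * b * (a * (u ⬝ᵥ v) + b * (v ⬝ᵥ v)) * hqv

theorem dotProduct_self_eq_zero_of_mem_span_pair (hp : p ∈ Submodule.span R {u, v})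
    (hpu : p ⬝ᵥ u = 0) (hpv : p ⬝ᵥ v = 0) : p ⬝ᵥ p = 0 := by
  obtain ⟨a, b, rfl⟩ := Submodule.mem_span_pair.mp hp
  rw [dotProduct_add, dotProduct_smul, dotProduct_smul, hpu, hpv, smul_zero, smul_zero, add_zero]

end DotProduct

theorem dot_eq_dotProduct (x y : Fin 3 → ℝ) : dot x y = x ⬝ᵥ y := rfl

theorem HSS_eq_of_gram {ξ1 ξ2 p1 p2 : Fin 3 → ℝ} (lam mu A B : ℝ)
    (hξ1 : ξ1 ⬝ᵥ ξ1 = 1) (hξ2 : ξ2 ⬝ᵥ ξ2 = 1) (hp11 : p1 ⬝ᵥ ξ1 = 0) (hp22 : p2 ⬝ᵥ ξ2 = 0)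
    (hp12 : p1 ⬝ᵥ p2 = ξ1 ⬝ᵥ ξ2) (hp21 : p2 ⬝ᵥ ξ1 = -(p1 ⬝ᵥ ξ2))
    (hs : (p1 ⬝ᵥ ξ2) ^ 2 = 1 - (ξ1 ⬝ᵥ ξ2) ^ 2) :
    HSS lam mu A B ξ1 ξ2 p1 p2 =
      (ξ1 + ξ2) ⬝ᵥ (ξ1 + ξ2) *
        ((lam + 2 * mu + B + A / 2) * (ξ1 ⬝ᵥ ξ2) ^ 2
          - (mu + B + A / 2) * (1 - (ξ1 ⬝ᵥ ξ2) ^ 2)) := by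
  simp only [HSS, dot_eq_dotProduct, add_dotProduct, dotProduct_add, dotProduct_comm ξ2 ξ1,
    dotProduct_comm ξ1 p2, hξ1, hξ2, hp11, hp22, hp12, hp21]
  linear_combination (-(2 * mu * (1 + 2 * ξ1 ⬝ᵥ ξ2)) - (A / 2) * (2 + 3 * ξ1 ⬝ᵥ ξ2)
    - B * (2 + 2 * ξ1 ⬝ᵥ ξ2)) * hs

theorem ss_interaction_HH_general (lam mu A B : ℝ) (ξ1 ξ2 : Fin 3 → ℝ)
    (hξ1 : dot ξ1 ξ1 = 1) (hξ2 : dot ξ2 ξ2 = 1) (p1 p2 : Fin 3 → ℝ)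
    (hp1unit : dot p1 p1 = 1)
    (hp1span : p1 ∈ Submodule.span ℝ ({ξ1, ξ2} : Set (Fin 3 → ℝ)))
    (hp11 : dot p1 ξ1 = 0) (hp12 : 0 ≤ dot p1 ξ2)
    (hp2unit : dot p2 p2 = 1)
    (hp2span : p2 ∈ Submodule.span ℝ ({ξ1, ξ2} : Set (Fin 3 → ℝ)))
    (hp22 : dot p2 ξ2 = 0) (hp21 : dot p2 ξ1 ≤ 0) :
    HSS lam mu A B ξ1 ξ2 p1 p2 =
      dot (ξ1 + ξ2) (ξ1 + ξ2) *
        ((lam + 2 * mu + B + A / 2) * (Real.cos (Real.arccos (dot ξ1 ξ2))) ^ 2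
          - (mu + B + A / 2) * (Real.sin (Real.arccos (dot ξ1 ξ2))) ^ 2) := by
  simp only [dot_eq_dotProduct] at *
  have hs : (p1 ⬝ᵥ ξ2) ^ 2 = 1 - (ξ1 ⬝ᵥ ξ2) ^ 2 := by
    simpa [hξ1, hξ2, hp1unit] using dotProduct_self_mul_sq_of_mem_span_pair hp1span hp11
  have ht : (p2 ⬝ᵥ ξ1) ^ 2 = 1 - (ξ1 ⬝ᵥ ξ2) ^ 2 := by
    rw [Set.pair_comm] at hp2span
    simpa [hξ1, hξ2, hp2unit, dotProduct_comm ξ2 ξ1] using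
      dotProduct_self_mul_sq_of_mem_span_pair hp2span hp22
  have hts : p2 ⬝ᵥ ξ1 = -(p1 ⬝ᵥ ξ2) := by
    have h := (sq_eq_sq_iff_abs_eq_abs _ _).mp (ht.trans hs.symm)
    rwa [abs_of_nonpos hp21, abs_of_nonneg hp12, neg_eq_iff_eq_neg] at h
  have hs0 : p1 ⬝ᵥ ξ2 ≠ 0 := fun h ↦ one_ne_zero <|
    hp1unit.symm.trans (dotProduct_self_eq_zero_of_mem_span_pair hp1span hp11 h)
  have hpp : p1 ⬝ᵥ p2 = ξ1 ⬝ᵥ ξ2 := by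
    have h := dotProduct_mul_dotProduct_of_mem_span_pair (q := p2) hp1span hp11 hp22
    rw [hξ1, hp1unit, hts, dotProduct_comm p2 p1] at h
    exact mul_right_cancel₀ hs0 (by linear_combination h)
  have hsin : 0 ≤ 1 - (ξ1 ⬝ᵥ ξ2) ^ 2 := hs ▸ sq_nonneg _
  have hc : |ξ1 ⬝ᵥ ξ2| ≤ 1 := (sq_le_one_iff_abs_le_one _).mp (by linarith)
  rw [cos_arccos (neg_le_of_abs_le hc) (le_of_abs_le hc), sin_arccos, sq_sqrt hsin]
  exact HSS_eq_of_gram lam mu A B hξ1 hξ2 hp11 hp22 hpp hts hs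

/-- The P-wave output of the interaction of two in-plane polarized S waves. -/
theorem ss_interaction_HH (lam mu A B : ℝ) (ξ1 ξ2 : Fin 3 → ℝ)
    (hind : LinearIndependent ℝ ![ξ1, ξ2])
    (hξ1 : dot ξ1 ξ1 = 1) (hξ2 : dot ξ2 ξ2 = 1) (p1 p2 : Fin 3 → ℝ)
    (hp1unit : dot p1 p1 = 1)
    (hp1span : p1 ∈ Submodule.span ℝ ({ξ1, ξ2} : Set (Fin 3 → ℝ)))
    (hp11 : dot p1 ξ1 = 0) (hp12 : 0 ≤ dot p1 ξ2)
    (hp2unit : dot p2 p2 = 1)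
    (hp2span : p2 ∈ Submodule.span ℝ ({ξ1, ξ2} : Set (Fin 3 → ℝ)))
    (hp22 : dot p2 ξ2 = 0) (hp21 : dot p2 ξ1 ≤ 0) :
    HSS lam mu A B ξ1 ξ2 p1 p2 =
      dot (ξ1 + ξ2) (ξ1 + ξ2) *
        ((lam + 2 * mu + B + A / 2) * (Real.cos (Real.arccos (dot ξ1 ξ2))) ^ 2
          - (mu + B + A / 2) * (Real.sin (Real.arccos (dot ξ1 ξ2))) ^ 2) :=
  ss_interaction_HH_general lam mu A B ξ1 ξ2 hξ1 hξ2 p1 p2 hp1unit hp1span hp11 hp12 hp2unit hp2span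
    hp22 hp21
end
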